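/- For integers n, k with 1 ≤ k ≤ n, the central factorial numbers of the second kind satisfy T(n+1,k) = (k/2)·T(n,k) + T(n,k-1|−1/2), where T(n,k|x) is defined by (1/k!)·e^{xt}·(e^{t/2} - e^{-t/2})^k = Σ_{n≥k} T(n,k|x)·t^n/n!. -/

import Mathlib

/-!
With `F x k t = e^{xt} (e^{t/2} - e^{-t/2})^k / k!`, the splitting
`(e^{t/2} + e^{-t/2}) / 2 = (e^{t/2} - e^{-t/2}) / 2 + e^{-t/2}` turns the derivative of
`F x (k+1)` into the differential relation `F x (k+1)' = (x + (k+1)/2) F x (k+1) + F (x - 1/2) k`.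
Taking `n`-th derivatives at `0` gives `T(n+1,k+1|x) = (x + (k+1)/2) T(n,k+1|x) + T(n,k|x-1/2)`,
and `x = 0` is the theorem.
-/

noncomputable def Tc (x : ℝ) (n k : ℕ) : ℝ :=
  iteratedDeriv n (fun t : ℝ =>
    (k.factorial : ℝ)⁻¹ * Real.exp (x * t) *
      (Real.exp (t / 2) - Real.exp (-(t / 2))) ^ k) 0

open Real Nat

noncomputable def centralFactorialGF (x : ℝ) (k : ℕ) (t : ℝ) : ℝ :=
  (k ! : ℝ)⁻¹ * exp (x * t) * (exp (t / 2) - exp (-(t / 2))) ^ k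

lemma Tc_eq_iteratedDeriv (x : ℝ) (n k : ℕ) :
    Tc x n k = iteratedDeriv n (centralFactorialGF x k) 0 := rfl

lemma contDiff_centralFactorialGF (x : ℝ) (k : ℕ) {n : WithTop ℕ∞} :
    ContDiff ℝ n (centralFactorialGF x k) := by
  unfold centralFactorialGF
  fun_prop

lemma hasDerivAt_exp_half_sub_exp_neg_half (t : ℝ) :
    HasDerivAt (fun t => exp (t / 2) - exp (-(t / 2))) ((exp (t / 2) + exp (-(t / 2))) / 2) t := by
  have half : HasDerivAt (fun t : ℝ => t / 2) (1 / 2) t := (hasDerivAt_id' t).div_const 2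
  refine (half.exp.fun_sub half.fun_neg.exp).congr_deriv ?_
  ring

lemma hasDerivAt_centralFactorialGF_succ (x : ℝ) (k : ℕ) (t : ℝ) :
    HasDerivAt (centralFactorialGF x (k + 1))
      ((x + (k + 1) / 2) * centralFactorialGF x (k + 1) t + centralFactorialGF (x - 1 / 2) k t) t := by
  have hexp : HasDerivAt (fun t => exp (x * t)) (exp (x * t) * x) t := by
    simpa using ((hasDerivAt_id' t).const_mul x).exp
  refine ((hexp.const_mul ((k + 1)! : ℝ)⁻¹).fun_mul
    ((hasDerivAt_exp_half_sub_exp_neg_half t).fun_pow (k + 1))).congr_deriv ?_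
  have hexp_shift : exp ((x - 1 / 2) * t) = exp (x * t) * exp (-(t / 2)) := by
    rw [← exp_add]; ring_nf
  simp only [centralFactorialGF, hexp_shift, Nat.add_sub_cancel, factorial_succ]
  push_cast
  field_simp
  ring

lemma deriv_centralFactorialGF_succ (x : ℝ) (k : ℕ) :
    deriv (centralFactorialGF x (k + 1)) =
      fun t => (x + (k + 1) / 2) * centralFactorialGF x (k + 1) t +
        centralFactorialGF (x - 1 / 2) k t :=
  funext fun t => (hasDerivAt_centralFactorialGF_succ x k t).deriv

theorem Tc_succ_succ (x : ℝ) (n k : ℕ) :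
    Tc x (n + 1) (k + 1) = (x + (k + 1) / 2) * Tc x n (k + 1) + Tc (x - 1 / 2) n k := by
  rw [Tc_eq_iteratedDeriv, iteratedDeriv_succ', deriv_centralFactorialGF_succ,
    iteratedDeriv_fun_add (contDiff_const.mul (contDiff_centralFactorialGF x (k + 1))).contDiffAt
      (contDiff_centralFactorialGF _ k).contDiffAt,
    iteratedDeriv_const_mul_field]
  rfl

theorem central_factorial_num_recurrence_general (n k : ℕ) (hk : 1 ≤ k) :
    Tc 0 (n + 1) k = ((k : ℝ) / 2) * Tc 0 n k + Tc (-(1 / 2)) n (k - 1) := by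
  obtain ⟨k, rfl⟩ := Nat.exists_eq_add_of_le' hk
  simpa using Tc_succ_succ 0 n k

theorem central_factorial_num_recurrence (n k : ℕ) (hk : 1 ≤ k) (hkn : k ≤ n) :
    Tc 0 (n + 1) k = ((k : ℝ) / 2) * Tc 0 n k + Tc (-(1 / 2)) n (k - 1) :=
  central_factorial_num_recurrence_general n k hk
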